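/- Let σ be a full-dimensional simplicial rational cone in N_ℝ with N ≅ ℤ^d, and let σ^0 ⊆ σ ∩ N be a free submonoid isomorphic to ℕ^d such that every element of σ ∩ N has a positive multiple in σ^0. Then F = { m ∈ M ⊗ ℚ : ⟨m, n⟩ ∈ ℤ_{≥0} for all n ∈ σ^0 } is a free commutative monoid of rank d containing σ^∨ ∩ M as a submonoid close to F. -/

import Mathlib

/-!
Pairing with the linearly independent generators `η i` of `σ⁰` is an invertible linear change of
coordinates `h ↦ (⟨h, η i⟩)ᵢ` on `M ⊗ ℚ`, and `h ∈ F` exactly when all these coordinates are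
natural numbers, so this change of coordinates identifies `F` with `ℕ^d`. An integral `h` that
is nonnegative on the `η i` has natural coordinates, so `σ^∨ ∩ M ⊆ F`; conversely a common
denominator of the coordinates of `h ∈ F` clears them into `M` without changing signs.
-/

open Matrix

theorem AddSubmonoid.nonempty_addEquiv_of_mem_iff_mem_mrange {M M' N : Type*} [AddMonoid M]
    [AddMonoid M'] [AddMonoid N] (e : M ≃+ M') (f : N →+ M') (hf : Function.Injective f)
    (F : AddSubmonoid M) (hF : ∀ x, x ∈ F ↔ e x ∈ AddMonoidHom.mrange f) :
    Nonempty (F ≃+ N) := by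
  have hFeq : F = AddMonoidHom.mrange ((e.symm : M' →+ M).comp f) := by
    ext x
    simp [hF, e.symm_apply_eq]
  exact ⟨(AddEquiv.addSubmonoidCongr hFeq).trans
    (AddEquiv.ofLeftInverse' _ (Function.leftInverse_invFun (e.symm.injective.comp hf))).symm⟩

theorem mem_mrange_compLeft_natCast_iff {R ι : Type*} [AddMonoidWithOne R] (v : ι → R) :
    v ∈ AddMonoidHom.mrange ((Nat.castAddMonoidHom R).compLeft ι) ↔ ∀ i, ∃ k : ℕ, v i = k := by
  refine ⟨fun ⟨k, hk⟩ i => ⟨k i, (congrFun hk i).symm⟩, fun hv => ?_⟩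
  choose k hk using hv
  exact ⟨k, funext fun i => (hk i).symm⟩

theorem compLeft_natCast_injective (R ι : Type*) [AddMonoidWithOne R] [CharZero R] :
    Function.Injective ((Nat.castAddMonoidHom R).compLeft ι) :=
  fun _ _ hab => funext fun i => Nat.cast_injective (congrFun hab i)

theorem Rat.exists_nat_eq_of_eq_intCast_of_nonneg {q : ℚ} {z : ℤ} (hq : q = z) (h0 : 0 ≤ q) :
    ∃ k : ℕ, q = k := by
  obtain ⟨k, rfl⟩ := Int.eq_ofNat_of_zero_le (by exact_mod_cast hq ▸ h0)
  exact ⟨k, by simp [hq]⟩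

theorem Rat.exists_pos_nsmul_eq_intCast {ι : Type*} [Fintype ι] (q : ι → ℚ) :
    ∃ n : ℕ, 0 < n ∧ ∃ m : ι → ℤ, ∀ j, n • q j = m j := by
  refine ⟨∏ j, (q j).den, Finset.prod_pos fun j _ => (q j).pos, ?_⟩
  have hdvd : ∀ j, (q j).den ∣ ∏ j, (q j).den := fun j =>
    Finset.dvd_prod_of_mem _ (Finset.mem_univ j)
  choose c hc using hdvd
  refine ⟨fun j => c j * (q j).num, fun j => ?_⟩
  calc (∏ j, (q j).den) • q j = c j * (q j * (q j).den) := by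
        rw [nsmul_eq_mul, hc j]; push_cast; ring
    _ = _ := by rw [Rat.mul_den_eq_num]; push_cast; rfl

theorem forall_mem_closure_range_exists_nat_iff {ι κ : Type*} [Fintype ι] (η : κ → ι → ℤ)
    (h : ι → ℚ) :
    (∀ s ∈ AddSubmonoid.closure (Set.range η), ∃ k : ℕ, ∑ j, h j * (s j : ℚ) = k) ↔
      ∀ i, ∃ k : ℕ, ∑ j, h j * (η i j : ℚ) = k := by
  let pairing : (ι → ℤ) →+ ℚ :=
    AddMonoidHom.mk' (fun s => ∑ j, h j * (s j : ℚ)) fun s t => by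
      simp [mul_add, Finset.sum_add_distrib]
  have key := AddSubmonoid.closure_le (s := Set.range η)
    (S := (AddMonoidHom.mrange (Nat.castAddMonoidHom ℚ)).comap pairing)
  simpa [SetLike.le_def, Set.range_subset_iff, pairing, eq_comm] using key

theorem nonempty_addEquiv_pi_nat_of_linearIndependent {ι : Type*} [Fintype ι] [DecidableEq ι]
    (η : ι → ι → ℤ) (hlin : LinearIndependent ℚ fun i j => (η i j : ℚ))
    (F : AddSubmonoid (ι → ℚ)) (hF : ∀ h, h ∈ F ↔ ∀ i, ∃ k : ℕ, ∑ j, h j * (η i j : ℚ) = k) :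
    Nonempty (F ≃+ (ι → ℕ)) := by
  set A := Matrix.of fun i j => (η i j : ℚ)
  have hA : IsUnit A := linearIndependent_rows_iff_isUnit.1 hlin
  let e : (ι → ℚ) ≃+ (ι → ℚ) := (LinearEquiv.ofBijective A.mulVecLin
    ⟨mulVec_injective_iff_isUnit.2 hA, mulVec_surjective_iff_isUnit.2 hA⟩).toAddEquiv
  refine AddSubmonoid.nonempty_addEquiv_of_mem_iff_mem_mrange e _
    (compLeft_natCast_injective ℚ ι) F fun h => ?_
  have he : e h = A *ᵥ h := rfl
  rw [hF, mem_mrange_compLeft_natCast_iff, he]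
  simp [A, mulVec, dotProduct, mul_comm]

/-- Let `σ` be a full-dimensional simplicial rational cone with
free-net `σ^0 ⊆ σ ∩ N` generated by the linearly independent lattice vectors
`η i` (so `σ^0 ≅ ℕ^d` and every element of `σ ∩ N` has a positive multiple in
`σ^0`; in particular `σ` is the cone spanned by the `η i`). Then
`F = { m ∈ M ⊗ ℚ : ⟨m, n⟩ ∈ ℤ_{≥0} ∀ n ∈ σ^0 }` is free of rank `d` and
contains `P = σ^∨ ∩ M` as a submonoid close to `F`. -/
theorem stmt10 {d : ℕ} (η : Fin d → (Fin d → ℤ))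
    (hlin : LinearIndependent ℚ fun i => fun j => (η i j : ℚ))
    (F P : AddSubmonoid (Fin d → ℚ))
    (hF : ∀ h : Fin d → ℚ, h ∈ F ↔
      ∀ s ∈ AddSubmonoid.closure (Set.range η),
        ∃ k : ℕ, ∑ j, h j * (s j : ℚ) = (k : ℚ))
    (hP : ∀ h : Fin d → ℚ, h ∈ P ↔
      ((∃ m : Fin d → ℤ, ∀ j, h j = (m j : ℚ)) ∧ ∀ i, 0 ≤ ∑ j, h j * (η i j : ℚ))) :
    Nonempty (F ≃+ (Fin d → ℕ)) ∧ P ≤ F ∧ ∀ h ∈ F, ∃ n : ℕ, 0 < n ∧ n • h ∈ P := by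
  have hFη : ∀ h, h ∈ F ↔ ∀ i, ∃ k : ℕ, ∑ j, h j * (η i j : ℚ) = k := fun h =>
    (hF h).trans (forall_mem_closure_range_exists_nat_iff η h)
  refine ⟨nonempty_addEquiv_pi_nat_of_linearIndependent η hlin F hFη, fun h hh => ?_,
    fun h hh => ?_⟩
  · obtain ⟨⟨m, hm⟩, hpos⟩ := (hP h).1 hh
    exact (hFη h).2 fun i => Rat.exists_nat_eq_of_eq_intCast_of_nonneg
      (z := ∑ j, m j * η i j) (by simp [hm]) (hpos i)
  · obtain ⟨n, hn, m, hm⟩ := Rat.exists_pos_nsmul_eq_intCast h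
    refine ⟨n, hn, (hP _).2 ⟨⟨m, hm⟩, fun i => ?_⟩⟩
    obtain ⟨k, hk⟩ := (hFη h).1 hh i
    simp only [Pi.smul_apply, smul_mul_assoc, ← Finset.smul_sum, hk]
    positivity
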